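/- arXiv:2408.04357 — 3 statements merged into one kernel-verified Lean document; each statement's English description precedes it below -/
import Mathlib

section
/- Let K_1,...,K_m be entrywise nonnegative n×n matrices and α_1,...,α_m nonnegative reals with Σ α_j = 1. Then the spectral radius satisfies r(K_1^{(α_1)} ∘ ... ∘ K_m^{(α_m)}) ≤ r(K_1)^{α_1} ··· r(K_m)^{α_m}. -/
/-!
Gelfand's formula `r(A) = lim ‖A ^ k‖ ^ (1 / k)` may be used with the max-row-sum norm, and for
that norm Hölder's inequality applies row by row. Writing `M` for the Hadamard geometric mean of
the `K j`, Hölder along the rows of a matrix product gives `(M ^ k) x y ≤ ∏ j, ((K j ^ k) x y) ^ α j`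
by induction on `k`, and once more along the rows `‖M ^ k‖ ≤ ∏ j, ‖K j ^ k‖ ^ α j`. Taking
`k`-th roots and letting `k → ∞` gives the claim.
-/

/-- The spectral radius of a real `n × n` matrix: the largest modulus of a complex
eigenvalue, obtained via the spectrum of the matrix over `ℂ`. -/
noncomputable def specRad {n : ℕ} (A : Matrix (Fin n) (Fin n) ℝ) : ℝ :=
  (spectralRadius ℂ (A.map (Complex.ofReal))).toReal

open Filter Topology Finset MeasureTheory

attribute [local instance] Matrix.linftyOpSeminormedAddCommGroup Matrix.linftyOpNormedRing
  Matrix.linftyOpNormedAlgebra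

theorem Real.sum_prod_rpow_le_prod_sum_rpow {ι κ : Type*} [Fintype ι] (s : Finset κ)
    {f : κ → ι → ℝ} (hf : ∀ k ∈ s, ∀ i, 0 ≤ f k i) {w : κ → ℝ} (hw : ∀ k ∈ s, 0 ≤ w k)
    (hw1 : ∑ k ∈ s, w k = 1) :
    ∑ i, ∏ k ∈ s, f k i ^ w k ≤ ∏ k ∈ s, (∑ i, f k i) ^ w k := by
  let : MeasurableSpace ι := ⊤
  have h := ENNReal.lintegral_prod_norm_pow_le (μ := Measure.count) s
    (f := fun k i => ENNReal.ofReal (f k i)) (fun _ _ => measurable_from_top.aemeasurable) hw1 hw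
  simp only [lintegral_count, tsum_fintype] at h
  have hsum : ∀ k ∈ s, 0 ≤ ∑ i, f k i := fun k hk => sum_nonneg fun i _ => hf k hk i
  rw [← ENNReal.ofReal_le_ofReal_iff (prod_nonneg fun k hk => Real.rpow_nonneg (hsum k hk) _),
    ENNReal.ofReal_sum_of_nonneg fun i _ => prod_nonneg fun k hk => Real.rpow_nonneg (hf k hk i) _,
    ENNReal.ofReal_prod_of_nonneg fun k hk => Real.rpow_nonneg (hsum k hk) _]
  convert h using 2 with i _ k hk k hk
  · rw [ENNReal.ofReal_prod_of_nonneg fun k hk => Real.rpow_nonneg (hf k hk i) _]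
    exact prod_congr rfl fun k hk => (ENNReal.ofReal_rpow_of_nonneg (hf k hk i) (hw k hk)).symm
  · rw [← ENNReal.ofReal_sum_of_nonneg fun i _ => hf k hk i]
    exact (ENNReal.ofReal_rpow_of_nonneg (hsum k hk) (hw k hk)).symm

namespace Matrix

section LinftyOp

variable {m n α β : Type*} [Fintype m] [Fintype n]

theorem linfty_opNorm_le_iff [SeminormedAddCommGroup α] (A : Matrix m n α) {C : ℝ} (hC : 0 ≤ C) :
    ‖A‖ ≤ C ↔ ∀ i, ∑ j, ‖A i j‖ ≤ C := by
  change ‖fun i => WithLp.toLp 1 (A i)‖ ≤ C ↔ _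
  simp only [pi_norm_le_iff_of_nonneg hC, PiLp.norm_eq_of_L1]

theorem sum_norm_le_linfty_opNorm [SeminormedAddCommGroup α] (A : Matrix m n α) (i : m) :
    ∑ j, ‖A i j‖ ≤ ‖A‖ :=
  (linfty_opNorm_le_iff A (norm_nonneg A)).1 le_rfl i

theorem linfty_opNorm_mono [SeminormedAddCommGroup α] [SeminormedAddCommGroup β]
    {A : Matrix m n α} {B : Matrix m n β} (h : ∀ i j, ‖A i j‖ ≤ ‖B i j‖) : ‖A‖ ≤ ‖B‖ :=
  (linfty_opNorm_le_iff A (norm_nonneg B)).2 fun i =>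
    (sum_le_sum fun j _ => h i j).trans (sum_norm_le_linfty_opNorm B i)

theorem linfty_opNorm_map_eq [SeminormedAddCommGroup α] [SeminormedAddCommGroup β]
    (A : Matrix m n α) (f : α → β) (hf : ∀ a, ‖f a‖ = ‖a‖) : ‖A.map f‖ = ‖A‖ :=
  le_antisymm (linfty_opNorm_mono fun i j => (hf (A i j)).le)
    (linfty_opNorm_mono fun i j => (hf (A i j)).ge)

end LinftyOp

section HadamardGeomMean

variable {κ l m n : Type*} [Fintype κ]

/-- The paper's `A₁^{(w₁)} ∘ ⋯ ∘ A_m^{(w_m)}`: entrywise powers, Hadamard product. -/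
noncomputable def hadamardGeomMean (A : κ → Matrix m n ℝ) (w : κ → ℝ) : Matrix m n ℝ :=
  of fun x y => ∏ j, A j x y ^ w j

variable {w : κ → ℝ}

theorem hadamardGeomMean_nonneg {A : κ → Matrix m n ℝ} (hA : ∀ j x y, 0 ≤ A j x y) (x : m)
    (y : n) : 0 ≤ hadamardGeomMean A w x y :=
  prod_nonneg fun j _ => Real.rpow_nonneg (hA j x y) _

theorem linfty_opNorm_hadamardGeomMean_le [Fintype m] [Fintype n] {A : κ → Matrix m n ℝ}
    (hA : ∀ j x y, 0 ≤ A j x y) (hw : ∀ j, 0 ≤ w j) (hw1 : ∑ j, w j = 1) :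
    ‖hadamardGeomMean A w‖ ≤ ∏ j, ‖A j‖ ^ w j := by
  refine (linfty_opNorm_le_iff _ (prod_nonneg fun j _ => by positivity)).2 fun x => ?_
  have hrow : ∀ j, ∑ y, A j x y ≤ ‖A j‖ := fun j => by
    simpa only [Real.norm_of_nonneg (hA j x _)] using sum_norm_le_linfty_opNorm (A j) x
  calc ∑ y, ‖hadamardGeomMean A w x y‖
      = ∑ y, ∏ j, A j x y ^ w j :=
        sum_congr rfl fun y _ => Real.norm_of_nonneg (hadamardGeomMean_nonneg hA x y)
    _ ≤ ∏ j, (∑ y, A j x y) ^ w j :=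
        Real.sum_prod_rpow_le_prod_sum_rpow _ (fun j _ => hA j x) (fun j _ => hw j) hw1
    _ ≤ ∏ j, ‖A j‖ ^ w j :=
        prod_le_prod (fun j _ => Real.rpow_nonneg (sum_nonneg fun y _ => hA j x y) _)
          fun j _ => Real.rpow_le_rpow (sum_nonneg fun y _ => hA j x y) (hrow j) (hw j)

theorem hadamardGeomMean_mul_apply_le [Fintype m] {A : κ → Matrix l m ℝ} {B : κ → Matrix m n ℝ}
    (hA : ∀ j x y, 0 ≤ A j x y) (hB : ∀ j x y, 0 ≤ B j x y) (hw : ∀ j, 0 ≤ w j)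
    (hw1 : ∑ j, w j = 1) (x : l) (y : n) :
    (hadamardGeomMean A w * hadamardGeomMean B w) x y ≤
      hadamardGeomMean (fun j => A j * B j) w x y := by
  calc (hadamardGeomMean A w * hadamardGeomMean B w) x y
      = ∑ z, ∏ j, (A j x z * B j z y) ^ w j := by
        simp only [mul_apply, hadamardGeomMean, of_apply, ← prod_mul_distrib,
          Real.mul_rpow (hA _ x _) (hB _ _ y)]
    _ ≤ ∏ j, (∑ z, A j x z * B j z y) ^ w j :=
        Real.sum_prod_rpow_le_prod_sum_rpow _
          (fun j _ z => mul_nonneg (hA j x z) (hB j z y)) (fun j _ => hw j) hw1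
    _ = hadamardGeomMean (fun j => A j * B j) w x y := rfl

theorem hadamardGeomMean_pow_apply_le [Fintype n] [DecidableEq n] {A : κ → Matrix n n ℝ}
    (hA : ∀ j x y, 0 ≤ A j x y) (hw : ∀ j, 0 ≤ w j) (hw1 : ∑ j, w j = 1) (k : ℕ) (x y : n) :
    (hadamardGeomMean A w ^ k) x y ≤ hadamardGeomMean (fun j => A j ^ k) w x y := by
  induction k generalizing y with
  | zero =>
    rcases eq_or_ne x y with rfl | hxy
    · simp [hadamardGeomMean]
    · simpa [one_apply_ne hxy] using
        hadamardGeomMean_nonneg (fun j => pow_apply_nonneg (hA j) 0) x y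
  | succ k ih =>
    calc (hadamardGeomMean A w ^ (k + 1)) x y
        = ∑ z, (hadamardGeomMean A w ^ k) x z * hadamardGeomMean A w z y := by
          rw [pow_succ, mul_apply]
      _ ≤ ∑ z, hadamardGeomMean (fun j => A j ^ k) w x z * hadamardGeomMean A w z y :=
          sum_le_sum fun z _ => mul_le_mul_of_nonneg_right (ih z) (hadamardGeomMean_nonneg hA z y)
      _ = (hadamardGeomMean (fun j => A j ^ k) w * hadamardGeomMean A w) x y := (mul_apply).symm
      _ ≤ hadamardGeomMean (fun j => A j ^ (k + 1)) w x y := by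
          simpa only [pow_succ] using hadamardGeomMean_mul_apply_le
            (fun j => pow_apply_nonneg (hA j) k) hA hw hw1 x y

theorem linfty_opNorm_hadamardGeomMean_pow_le [Fintype n] [DecidableEq n] {A : κ → Matrix n n ℝ}
    (hA : ∀ j x y, 0 ≤ A j x y) (hw : ∀ j, 0 ≤ w j) (hw1 : ∑ j, w j = 1) (k : ℕ) :
    ‖hadamardGeomMean A w ^ k‖ ≤ ∏ j, ‖A j ^ k‖ ^ w j := by
  have hAk : ∀ j x y, 0 ≤ (A j ^ k) x y := fun j => pow_apply_nonneg (hA j) k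
  refine (linfty_opNorm_mono fun x y => ?_).trans
    (linfty_opNorm_hadamardGeomMean_le hAk hw hw1)
  rw [Real.norm_of_nonneg (pow_apply_nonneg (hadamardGeomMean_nonneg hA) k x y),
    Real.norm_of_nonneg (hadamardGeomMean_nonneg hAk x y)]
  exact hadamardGeomMean_pow_apply_le hA hw hw1 k x y

end HadamardGeomMean

end Matrix

theorem tendsto_norm_pow_rpow_one_div_specRad {n : ℕ} (A : Matrix (Fin n) (Fin n) ℝ) :
    Tendsto (fun k : ℕ => ‖A ^ k‖ ^ (1 / (k : ℝ))) atTop (𝓝 (specRad A)) := by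
  set Aℂ := A.map Complex.ofReal
  have hfin : spectralRadius ℂ Aℂ ≠ ⊤ :=
    ((spectrum.spectralRadius_le_pow_nnnorm_pow_one_div ℂ Aℂ 0).trans_lt
      (by simp [ENNReal.mul_lt_top])).ne
  have hnorm (k : ℕ) : ‖Aℂ ^ k‖ = ‖A ^ k‖ := by
    rw [show Aℂ ^ k = (A ^ k).map Complex.ofReal from (A.map_pow Complex.ofRealHom k).symm]
    exact Matrix.linfty_opNorm_map_eq _ _ Complex.norm_real
  refine ((ENNReal.tendsto_toReal hfin).comp
    (spectrum.pow_norm_pow_one_div_tendsto_nhds_spectralRadius Aℂ)).congr fun k => ?_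
  simp only [Function.comp_apply, hnorm]
  exact ENNReal.toReal_ofReal (by positivity)

/-- For nonnegative matrices `K j` and nonnegative weights `α j` summing to `1`,
`r(K₁^{(α₁)} ∘ ⋯ ∘ K_m^{(α_m)}) ≤ r(K₁)^{α₁} ⋯ r(K_m)^{α_m}`. -/
theorem specRad_hadamard_geom_mean_le {n m : ℕ} (K : Fin m → Matrix (Fin n) (Fin n) ℝ)
    (α : Fin m → ℝ) (hK : ∀ j x y, 0 ≤ K j x y) (hα : ∀ j, 0 ≤ α j)
    (hsum : ∑ j, α j = 1) :
    specRad (Matrix.of fun x y => ∏ j, (K j x y) ^ (α j)) ≤ ∏ j, specRad (K j) ^ (α j) := by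
  have hroots : Tendsto (fun k : ℕ => ∏ j, (‖K j ^ k‖ ^ (1 / (k : ℝ))) ^ α j) atTop
      (𝓝 (∏ j, specRad (K j) ^ α j)) :=
    tendsto_finsetProd _ fun j _ =>
      (tendsto_norm_pow_rpow_one_div_specRad (K j)).rpow_const (Or.inr (hα j))
  refine le_of_tendsto_of_tendsto'
    (tendsto_norm_pow_rpow_one_div_specRad (Matrix.hadamardGeomMean K α)) hroots fun k => ?_
  calc ‖Matrix.hadamardGeomMean K α ^ k‖ ^ (1 / (k : ℝ))
      ≤ (∏ j, ‖K j ^ k‖ ^ α j) ^ (1 / (k : ℝ)) :=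
        Real.rpow_le_rpow (norm_nonneg _)
          (Matrix.linfty_opNorm_hadamardGeomMean_pow_le hK hα hsum k) (by positivity)
    _ = ∏ j, (‖K j ^ k‖ ^ (1 / (k : ℝ))) ^ α j := by
        rw [← Real.finsetProd_rpow _ _ fun j _ => by positivity]
        refine prod_congr rfl fun j _ => ?_
        rw [← Real.rpow_mul (norm_nonneg _), mul_comm, Real.rpow_mul (norm_nonneg _)]
end

section
/- Let A be an entrywise nonnegative n×n matrix, α ∈ [0,1], and S_α(A) the weighted geometric symmetrization with entries a_{ij}^α a_{ji}^{1-α}. Then ‖S_α(A)‖ ≤ ‖A‖, where ‖·‖ is the ℓ²→ℓ² operator norm. -/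
/-- The ℓ² → ℓ² operator norm of a real `n × n` matrix. -/
noncomputable def opNorm {n : ℕ} (A : Matrix (Fin n) (Fin n) ℝ) : ℝ :=
  ‖LinearMap.toContinuousLinearMap (Matrix.toEuclideanLin A)‖

/-- The weighted geometric symmetrization `S_α(A)` with entries `a_{ij}^α a_{ji}^{1-α}`. -/
noncomputable def wgs {n : ℕ} (α : ℝ) (A : Matrix (Fin n) (Fin n) ℝ) :
    Matrix (Fin n) (Fin n) ℝ :=
  Matrix.of fun i j => A i j ^ α * A j i ^ (1 - α)

/-!
Weighted AM–GM gives, entrywise, `0 ≤ a_{ij}^α a_{ji}^{1-α} ≤ α a_{ij} + (1-α) a_{ji}`, i.e.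
`0 ≤ S_α(A) ≤ αA + (1-α)Aᵀ`. The ℓ² operator norm is monotone under such domination (as
`|Bx| ≤ C|x|` coordinatewise and `‖|x|‖ = ‖x‖`), so
`‖S_α(A)‖ ≤ α‖A‖ + (1-α)‖Aᵀ‖ = ‖A‖`.
-/

open scoped Matrix.Norms.L2Operator

lemma EuclideanSpace.norm_le_norm_of_abs_le {n : Type*} [Fintype n] {x y : EuclideanSpace ℝ n}
    (h : ∀ i, |x i| ≤ |y i|) : ‖x‖ ≤ ‖y‖ := by
  rw [EuclideanSpace.norm_eq, EuclideanSpace.norm_eq]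
  gcongr with i
  simpa only [Real.norm_eq_abs] using h i

namespace Matrix

variable {m n : Type*} [Fintype n]

lemma abs_mulVec_le_mulVec_abs {B C : Matrix m n ℝ} (h : ∀ i j, |B i j| ≤ C i j)
    (x : n → ℝ) (i : m) : |(B *ᵥ x) i| ≤ (C *ᵥ fun j ↦ |x j|) i := by
  simp only [mulVec, dotProduct]
  refine (Finset.abs_sum_le_sum_abs _ _).trans (Finset.sum_le_sum fun j _ ↦ ?_)
  rw [abs_mul]
  exact mul_le_mul_of_nonneg_right (h i j) (abs_nonneg _)

variable [Fintype m] [DecidableEq n]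

lemma l2_opNorm_le_of_abs_le {B C : Matrix m n ℝ} (h : ∀ i j, |B i j| ≤ C i j) :
    ‖B‖ ≤ ‖C‖ := by
  rw [l2_opNorm_def]
  refine ContinuousLinearMap.opNorm_le_bound _ (norm_nonneg C) fun x ↦ ?_
  set xAbs : EuclideanSpace ℝ n := WithLp.toLp 2 fun j ↦ |x j|
  have hxAbs : ‖xAbs‖ = ‖x‖ :=
    le_antisymm (EuclideanSpace.norm_le_norm_of_abs_le fun j ↦ (abs_abs _).le)
      (EuclideanSpace.norm_le_norm_of_abs_le fun j ↦ (abs_abs _).ge)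
  calc _ ≤ ‖(EuclideanSpace.equiv m ℝ).symm (C *ᵥ xAbs)‖ :=
        EuclideanSpace.norm_le_norm_of_abs_le fun i ↦
          (abs_mulVec_le_mulVec_abs h x i).trans (le_abs_self _)
    _ ≤ ‖C‖ * ‖xAbs‖ := l2_opNorm_mulVec C xAbs
    _ = ‖C‖ * ‖x‖ := by rw [hxAbs]

lemma l2_opNorm_transpose [DecidableEq m] (A : Matrix m n ℝ) : ‖Aᵀ‖ = ‖A‖ := by
  rw [← conjTranspose_eq_transpose_of_trivial, l2_opNorm_conjTranspose]

end Matrix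

open Matrix

lemma abs_wgs_apply_le {n : ℕ} {A : Matrix (Fin n) (Fin n) ℝ} (hA : ∀ i j, 0 ≤ A i j)
    {α : ℝ} (hα0 : 0 ≤ α) (hα1 : α ≤ 1) (i j : Fin n) :
    |wgs α A i j| ≤ (α • A + (1 - α) • Aᵀ) i j := by
  have hnonneg : 0 ≤ A i j ^ α * A j i ^ (1 - α) :=
    mul_nonneg (Real.rpow_nonneg (hA i j) _) (Real.rpow_nonneg (hA j i) _)
  rw [wgs, of_apply, abs_of_nonneg hnonneg]
  exact Real.geom_mean_le_arith_mean2_weighted hα0 (by linarith) (hA i j) (hA j i) (by ring)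

/-- For a nonnegative matrix `A` and `α ∈ [0,1]`, `‖S_α(A)‖ ≤ ‖A‖`. -/
theorem opNorm_wgs_le {n : ℕ} (A : Matrix (Fin n) (Fin n) ℝ) (hA : ∀ i j, 0 ≤ A i j)
    (α : ℝ) (hα0 : 0 ≤ α) (hα1 : α ≤ 1) :
    opNorm (wgs α A) ≤ opNorm A := by
  have h1α : 0 ≤ 1 - α := by linarith
  calc opNorm (wgs α A) = ‖wgs α A‖ := rfl
    _ ≤ ‖α • A + (1 - α) • Aᵀ‖ := l2_opNorm_le_of_abs_le (abs_wgs_apply_le hA hα0 hα1)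
    _ ≤ α * ‖A‖ + (1 - α) * ‖Aᵀ‖ := by
        grw [norm_add_le, norm_smul, norm_smul, Real.norm_of_nonneg hα0,
          Real.norm_of_nonneg h1α]
    _ = ‖A‖ := by rw [l2_opNorm_transpose]; ring
    _ = opNorm A := rfl
end

section
/- Let A be an entrywise nonnegative n×n matrix. Then the function α ↦ ‖S_α(A)‖ (ℓ²→ℓ² operator norm of the weighted geometric symmetrization S_α(A) with entries a_{ij}^α a_{ji}^{1−α}) is monotonically decreasing on [0, 1/2] and monotonically increasing on [1/2, 1]. In particular, ‖S_α(A)‖ ≥ ‖S_{1/2}(A)‖ for all α ∈ [0,1]. -/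
/-!
For nonnegative `A`, weighted AM–GM applied entrywise gives
`S_{aα + bβ}(A) ≤ a S_α(A) + b S_β(A)`, and the ℓ² operator norm is monotone under entrywise
domination of absolute values, so `α ↦ ‖S_α(A)‖` is convex on `[0, 1]`. As
`S_{1-α}(A) = S_α(A)ᵀ` has the same norm, this convex function is symmetric about `1/2`, hence
bounded on the interval between `α` and `1 - α` by its value at `α`.
-/

open Matrix Set
open scoped Matrix.Norms.L2Operator

theorem EuclideanSpace.norm_le_norm_of_forall_abs_le {ι : Type*} [Fintype ι]
    {x y : EuclideanSpace ℝ ι} (h : ∀ i, |x i| ≤ |y i|) : ‖x‖ ≤ ‖y‖ := by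
  rw [EuclideanSpace.norm_eq, EuclideanSpace.norm_eq]
  gcongr with i
  simpa only [Real.norm_eq_abs] using h i

theorem Matrix.abs_mulVec_le_mulVec_abs_s10 {m n : Type*} [Fintype n] {M N : Matrix m n ℝ}
    (h : ∀ i j, |M i j| ≤ N i j) (x : n → ℝ) (i : m) :
    |(M *ᵥ x) i| ≤ (N *ᵥ fun j => |x j|) i :=
  (Finset.abs_sum_le_sum_abs _ _).trans <| Finset.sum_le_sum fun j _ => by
    rw [abs_mul]
    exact mul_le_mul_of_nonneg_right (h i j) (abs_nonneg _)

theorem Matrix.l2_opNorm_le_of_abs_le_s10 {m n : Type*} [Fintype m] [Fintype n] [DecidableEq n]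
    {M N : Matrix m n ℝ} (h : ∀ i j, |M i j| ≤ N i j) : ‖M‖ ≤ ‖N‖ := by
  refine ContinuousLinearMap.opNorm_le_bound _ (norm_nonneg N) fun x => ?_
  let absx : EuclideanSpace ℝ n := WithLp.toLp 2 fun j => |x j|
  have habsx : ‖absx‖ = ‖x‖ :=
    le_antisymm (EuclideanSpace.norm_le_norm_of_forall_abs_le fun j => by simp [absx])
      (EuclideanSpace.norm_le_norm_of_forall_abs_le fun j => by simp [absx])
  calc ‖toEuclideanLin M x‖ ≤ ‖(EuclideanSpace.equiv m ℝ).symm (N *ᵥ absx)‖ := by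
        exact EuclideanSpace.norm_le_norm_of_forall_abs_le fun i =>
          (abs_mulVec_le_mulVec_abs_s10 h x.ofLp i).trans (le_abs_self _)
    _ ≤ ‖N‖ * ‖absx‖ := l2_opNorm_mulVec N absx
    _ = ‖N‖ * ‖x‖ := by rw [habsx]

theorem opNorm_eq_l2_opNorm {n : ℕ} (A : Matrix (Fin n) (Fin n) ℝ) : opNorm A = ‖A‖ := rfl

theorem opNorm_transpose {n : ℕ} (A : Matrix (Fin n) (Fin n) ℝ) : opNorm Aᵀ = opNorm A := by
  rw [opNorm_eq_l2_opNorm, opNorm_eq_l2_opNorm, ← conjTranspose_eq_transpose_of_trivial,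
    l2_opNorm_conjTranspose]

theorem Real.rpow_mul_add_mul {p α β a b : ℝ} (hp : 0 ≤ p) (hα : 0 ≤ α) (hβ : 0 ≤ β)
    (ha : 0 ≤ a) (hb : 0 ≤ b) : p ^ (α * a + β * b) = (p ^ α) ^ a * (p ^ β) ^ b := by
  rw [Real.rpow_add_of_nonneg hp (mul_nonneg hα ha) (mul_nonneg hβ hb), Real.rpow_mul hp,
    Real.rpow_mul hp]

section wgs

variable {n : ℕ} {A : Matrix (Fin n) (Fin n) ℝ}

theorem wgs_nonneg (hA : ∀ i j, 0 ≤ A i j) (α : ℝ) (i j : Fin n) : 0 ≤ wgs α A i j :=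
  mul_nonneg (Real.rpow_nonneg (hA i j) _) (Real.rpow_nonneg (hA j i) _)

theorem wgs_one_sub (α : ℝ) : wgs (1 - α) A = (wgs α A)ᵀ := by
  ext i j
  simp only [wgs, of_apply, transpose_apply, sub_sub_cancel, mul_comm]

theorem opNorm_wgs_one_sub (α : ℝ) :
    opNorm (wgs (1 - α) A) = opNorm (wgs α A) := by
  rw [wgs_one_sub, opNorm_transpose]

theorem wgs_mul_add_mul_apply (hA : ∀ i j, 0 ≤ A i j) {α β a b : ℝ} (hα : α ∈ Icc (0 : ℝ) 1)
    (hβ : β ∈ Icc (0 : ℝ) 1) (ha : 0 ≤ a) (hb : 0 ≤ b) (hab : a + b = 1) (i j : Fin n) :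
    wgs (a * α + b * β) A i j = wgs α A i j ^ a * wgs β A i j ^ b := by
  have hexp : 1 - (a * α + b * β) = (1 - α) * a + (1 - β) * b := by
    linear_combination -hab
  simp only [wgs, of_apply]
  rw [Real.mul_rpow (Real.rpow_nonneg (hA i j) _) (Real.rpow_nonneg (hA j i) _),
    Real.mul_rpow (Real.rpow_nonneg (hA i j) _) (Real.rpow_nonneg (hA j i) _), hexp,
    mul_comm a, mul_comm b,
    Real.rpow_mul_add_mul (hA i j) hα.1 hβ.1 ha hb,
    Real.rpow_mul_add_mul (hA j i) (sub_nonneg.2 hα.2) (sub_nonneg.2 hβ.2) ha hb]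
  ring

theorem convexOn_opNorm_wgs (hA : ∀ i j, 0 ≤ A i j) :
    ConvexOn ℝ (Icc 0 1) fun α => opNorm (wgs α A) := by
  refine ⟨convex_Icc 0 1, fun α hα β hβ a b ha hb hab => ?_⟩
  simp only [smul_eq_mul, opNorm_eq_l2_opNorm]
  have hentry : ∀ i j, |wgs (a * α + b * β) A i j| ≤ (a • wgs α A + b • wgs β A) i j := by
    intro i j
    rw [abs_of_nonneg (wgs_nonneg hA _ i j), wgs_mul_add_mul_apply hA hα hβ ha hb hab]
    exact Real.geom_mean_le_arith_mean2_weighted ha hb (wgs_nonneg hA α i j)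
      (wgs_nonneg hA β i j) hab
  calc ‖wgs (a * α + b * β) A‖ ≤ ‖a • wgs α A + b • wgs β A‖ := l2_opNorm_le_of_abs_le_s10 hentry
    _ ≤ a * ‖wgs α A‖ + b * ‖wgs β A‖ := by
      refine (norm_add_le _ _).trans_eq ?_
      rw [norm_smul, norm_smul, Real.norm_of_nonneg ha, Real.norm_of_nonneg hb]

theorem opNorm_wgs_le_of_mem_uIcc (hA : ∀ i j, 0 ≤ A i j) {α β : ℝ} (hα : α ∈ Icc (0 : ℝ) 1)
    (hβ : β ∈ uIcc α (1 - α)) : opNorm (wgs β A) ≤ opNorm (wgs α A) := by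
  have hα' : 1 - α ∈ Icc (0 : ℝ) 1 := ⟨sub_nonneg.2 hα.2, by linarith [hα.1]⟩
  rw [← segment_eq_uIcc] at hβ
  calc opNorm (wgs β A) ≤ max (opNorm (wgs α A)) (opNorm (wgs (1 - α) A)) :=
        (convexOn_opNorm_wgs hA).le_on_segment hα hα' hβ
    _ = opNorm (wgs α A) := by rw [opNorm_wgs_one_sub, max_self]

end wgs

/-- `α ↦ ‖S_α(A)‖` is decreasing on `[0, 1/2]` and increasing on `[1/2, 1]`;
in particular `‖S_α(A)‖ ≥ ‖S_{1/2}(A)‖` for all `α ∈ [0,1]`. -/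
theorem opNorm_wgs_monotonicity {n : ℕ} (A : Matrix (Fin n) (Fin n) ℝ)
    (hA : ∀ i j, 0 ≤ A i j) :
    (∀ a b : ℝ, 0 ≤ a → a ≤ b → b ≤ 1 / 2 → opNorm (wgs b A) ≤ opNorm (wgs a A)) ∧
    (∀ a b : ℝ, 1 / 2 ≤ a → a ≤ b → b ≤ 1 → opNorm (wgs a A) ≤ opNorm (wgs b A)) ∧
    (∀ α : ℝ, 0 ≤ α → α ≤ 1 → opNorm (wgs (1 / 2) A) ≤ opNorm (wgs α A)) := by
  refine ⟨fun a b ha hab hb => ?_, fun a b ha hab hb => ?_, fun α hα₀ hα₁ => ?_⟩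
  · exact opNorm_wgs_le_of_mem_uIcc hA ⟨ha, by linarith⟩
      (mem_uIcc.2 (Or.inl ⟨hab, by linarith⟩))
  · exact opNorm_wgs_le_of_mem_uIcc hA ⟨by linarith, hb⟩
      (mem_uIcc.2 (Or.inr ⟨by linarith, hab⟩))
  · exact opNorm_wgs_le_of_mem_uIcc hA ⟨hα₀, hα₁⟩
      (mem_uIcc.2 ((le_total α (1 / 2)).imp (fun h => ⟨h, by linarith⟩)
        (fun h => ⟨by linarith, h⟩)))
end
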